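/- Consider the ODE system on ℝ³: dx/dt = (1 − xwu)·wu, dw/dt = (1 − xwu)·xu, du/dt = (1 − xwu)·xw. The point (1,1,1) is an equilibrium, and the function V(x,w,u) = (x−1)² + (w−1)² + (u−1)² is a Lyapunov function at (1,1,1) on the open unit cube (0,1)³: V is positive away from (1,1,1), vanishes at (1,1,1), and its derivative along trajectories, V̇ = (3xwu − wu − xu − xw)(1 − xwu)·2 (up to a positive factor), is nonpositive for (x,w,u) ∈ (0,1)³. -/
import Mathlib

/-- The right-hand side of the ODE system
`dx/dt = (1 − xwu)wu, dw/dt = (1 − xwu)xu, du/dt = (1 − xwu)xw`. -/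
noncomputable def odeRHS (q : ℝ × ℝ × ℝ) : ℝ × ℝ × ℝ :=
  ((1 - q.1 * q.2.1 * q.2.2) * (q.2.1 * q.2.2),
   (1 - q.1 * q.2.1 * q.2.2) * (q.1 * q.2.2),
   (1 - q.1 * q.2.1 * q.2.2) * (q.1 * q.2.1))

/-- The candidate Lyapunov function `V(x,w,u) = (x−1)² + (w−1)² + (u−1)²`. -/
noncomputable def lyapV (q : ℝ × ℝ × ℝ) : ℝ :=
  (q.1 - 1) ^ 2 + (q.2.1 - 1) ^ 2 + (q.2.2 - 1) ^ 2

/-- `(1,1,1)` is an equilibrium of the system, `V` is a Lyapunov function at `(1,1,1)`: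
`V` vanishes at `(1,1,1)`, is positive elsewhere, and its derivative along
trajectories is nonpositive on the open unit cube `(0,1)³`. -/
theorem lyapunov_stability :
    odeRHS (1, 1, 1) = (0, 0, 0) ∧
    lyapV (1, 1, 1) = 0 ∧
    (∀ q : ℝ × ℝ × ℝ, q ≠ (1, 1, 1) → 0 < lyapV q) ∧
    (∀ q : ℝ × ℝ × ℝ, q.1 ∈ Set.Ioo (0 : ℝ) 1 → q.2.1 ∈ Set.Ioo (0 : ℝ) 1 →
      q.2.2 ∈ Set.Ioo (0 : ℝ) 1 →
      2 * (q.1 - 1) * (odeRHS q).1 + 2 * (q.2.1 - 1) * (odeRHS q).2.1 +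
        2 * (q.2.2 - 1) * (odeRHS q).2.2 ≤ 0) := by
  refine ⟨by simp [odeRHS], by simp [lyapV], ?_, ?_⟩
  · rintro ⟨x, w, u⟩ hq
    simp only [lyapV]
    rcases lt_or_ge 0 ((x - 1) ^ 2 + (w - 1) ^ 2 + (u - 1) ^ 2) with h | h
    · exact h
    · exfalso
      apply hq
      have hx : (x - 1) ^ 2 = 0 := by nlinarith [sq_nonneg (x-1), sq_nonneg (w-1), sq_nonneg (u-1)]
      have hw : (w - 1) ^ 2 = 0 := by nlinarith [sq_nonneg (x-1), sq_nonneg (w-1), sq_nonneg (u-1)]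
      have hu : (u - 1) ^ 2 = 0 := by nlinarith [sq_nonneg (x-1), sq_nonneg (w-1), sq_nonneg (u-1)]
      have : x = 1 := by nlinarith
      have : w = 1 := by nlinarith
      have : u = 1 := by nlinarith
      simp_all
  · rintro ⟨x, w, u⟩ ⟨hx0, hx1⟩ ⟨hw0, hw1⟩ ⟨hu0, hu1⟩
    simp only at hx0 hx1 hw0 hw1 hu0 hu1
    simp only [odeRHS]
    have hxw : x * w < 1 := by nlinarith
    have h1 : 0 < 1 - x * w * u := by nlinarith [mul_pos hx0 hw0]
    have h2 : 3 * (x * w * u) ≤ w * u + x * u + x * w := by nlinarith [mul_pos hw0 hu0, mul_pos hx0 hu0, mul_pos hx0 hw0]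
    nlinarith [mul_nonneg h1.le (sub_nonneg.2 h2)]
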